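/- (Banach–Grunblum criterion for normed spaces, sufficiency) Let X be a normed space and (xₙ) a sequence of nonzero vectors such that there exists M ≥ 1 with ‖∑_{i=1}^m aᵢxᵢ‖ ≤ M‖∑_{i=1}^n aᵢxᵢ‖ for all scalars (aᵢ) and all m ≤ n. Then (xₙ) is an essential basic sequence: it is an essential Schauder basis of the closure of its linear span. -/

import Mathlib

/-!
The Grunblum bound controls expansions uniformly: `‖Sₙ a‖ ≤ M ‖v‖` for every expansion `a` of
`v`, and hence `‖aₙ‖ ≤ 2M ‖v‖ / ‖xₙ‖`. The coefficient bound gives uniqueness of expansions.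
It also shows that the vectors admitting an expansion form a closed subspace: if `w k → v`,
the expansions of the `w k` have Cauchy coefficients, and their partial sums converge uniformly
in the length, so the limit coefficients expand `v`. This subspace contains every `xₙ`, hence
the closed linear span.
-/

open Filter Topology

variable (𝕜 : Type*) [RCLike 𝕜]
variable {X : Type*} [NormedAddCommGroup X] [NormedSpace 𝕜 X]

/-- The `n`-th partial sum `∑_{i<n} aᵢ • xᵢ` of the expansion with coefficients `a`. -/
noncomputable def partialSum (x : ℕ → X) (a : ℕ → 𝕜) (n : ℕ) : X :=
  ∑ i ∈ Finset.range n, a i • x i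

/-- `v` has the expansion `v = ∑ᵢ aᵢ xᵢ` (ordered convergence of partial sums). -/
def Expands (x : ℕ → X) (a : ℕ → 𝕜) (v : X) : Prop :=
  Filter.Tendsto (partialSum 𝕜 x a) Filter.atTop (nhds v)

/-- `(xₙ)` is a Schauder basis of `X`: every vector has a unique expansion. -/
def IsSchauderBasis (x : ℕ → X) : Prop :=
  ∀ v : X, ∃! a : ℕ → 𝕜, Expands 𝕜 x a v

/-- `(xₙ)` is an essential Schauder basis of `X`: a Schauder basis for which the canonical
map `T : L_X → X` is an isomorphism; equivalently (since `‖T‖ ≤ 1` always holds), there is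
`C > 0` bounding `η(a) = supₙ ‖∑_{i<n} aᵢxᵢ‖ ≤ C‖v‖` for every expansion `v = ∑ aᵢxᵢ`,
i.e. `‖T⁻¹‖ ≤ C`. -/
def IsEssentialBasis (x : ℕ → X) : Prop :=
  IsSchauderBasis 𝕜 x ∧
    ∃ C > 0, ∀ (a : ℕ → 𝕜) (v : X), Expands 𝕜 x a v →
      ∀ n, ‖partialSum 𝕜 x a n‖ ≤ C * ‖v‖

/-- `(xₙ)` is an essential basic sequence: an essential Schauder basis of the closure of
its linear span. -/
def IsEssentialBasicSeq (x : ℕ → X) : Prop :=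
  (∀ v ∈ closure (Submodule.span 𝕜 (Set.range x) : Set X),
      ∃! a : ℕ → 𝕜, Expands 𝕜 x a v) ∧
    ∃ C > 0, ∀ (a : ℕ → 𝕜) (v : X), Expands 𝕜 x a v →
      ∀ n, ‖partialSum 𝕜 x a n‖ ≤ C * ‖v‖

/-- The Grunblum condition with constant `M`. -/
def Grunblum (x : ℕ → X) (M : ℝ) : Prop :=
  ∀ (a : ℕ → 𝕜) (m n : ℕ), m ≤ n →
    ‖partialSum 𝕜 x a m‖ ≤ M * ‖partialSum 𝕜 x a n‖

theorem cauchySeq_of_dist_le_mul {ι α β : Type*} [Nonempty ι] [SemilatticeSup ι]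
    [PseudoMetricSpace α] [PseudoMetricSpace β] {f : ι → α} {g : ι → β} {C : ℝ}
    (hg : CauchySeq g) (h : ∀ j k, dist (f j) (f k) ≤ C * dist (g j) (g k)) :
    CauchySeq f := by
  rw [cauchySeq_iff_tendsto_dist_atTop_0] at hg ⊢
  exact squeeze_zero (fun _ => dist_nonneg) (fun p : ι × ι => h p.1 p.2)
    (by simpa using hg.const_mul C)

section

variable {𝕜} {x : ℕ → X} {a b : ℕ → 𝕜} {v w : X}

theorem partialSum_add (n : ℕ) :
    partialSum 𝕜 x (a + b) n = partialSum 𝕜 x a n + partialSum 𝕜 x b n := by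
  simp [partialSum, add_smul, Finset.sum_add_distrib]

theorem partialSum_sub (n : ℕ) :
    partialSum 𝕜 x (a - b) n = partialSum 𝕜 x a n - partialSum 𝕜 x b n := by
  simp [partialSum, sub_smul, Finset.sum_sub_distrib]

theorem partialSum_smul (c : 𝕜) (n : ℕ) :
    partialSum 𝕜 x (c • a) n = c • partialSum 𝕜 x a n := by
  simp [partialSum, Finset.smul_sum, smul_smul]

theorem partialSum_succ_sub (n : ℕ) :
    partialSum 𝕜 x a (n + 1) - partialSum 𝕜 x a n = a n • x n := by
  simp [partialSum, Finset.sum_range_succ]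

theorem partialSum_pi_single {n m : ℕ} (h : n < m) :
    partialSum 𝕜 x (Pi.single n 1) m = x n := by
  simp [partialSum, Pi.single_apply, ite_smul, h]

theorem expands_zero : Expands 𝕜 x 0 0 :=
  tendsto_const_nhds.congr fun n => by simp [partialSum]

theorem expands_pi_single (n : ℕ) : Expands 𝕜 x (Pi.single n 1) (x n) :=
  tendsto_const_nhds.congr' <| eventually_atTop.2
    ⟨n + 1, fun _ hm => (partialSum_pi_single hm).symm⟩

theorem Expands.add (ha : Expands 𝕜 x a v) (hb : Expands 𝕜 x b w) :
    Expands 𝕜 x (a + b) (v + w) :=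
  (Tendsto.add ha hb).congr fun n => (partialSum_add n).symm

theorem Expands.sub (ha : Expands 𝕜 x a v) (hb : Expands 𝕜 x b w) :
    Expands 𝕜 x (a - b) (v - w) :=
  (Tendsto.sub ha hb).congr fun n => (partialSum_sub n).symm

theorem Expands.smul (c : 𝕜) (ha : Expands 𝕜 x a v) : Expands 𝕜 x (c • a) (c • v) :=
  (Tendsto.const_smul ha c).congr fun n => (partialSum_smul c n).symm

variable (𝕜) in
def expansionSubmodule (x : ℕ → X) : Submodule 𝕜 X where
  carrier := {v | ∃ a, Expands 𝕜 x a v}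
  zero_mem' := ⟨0, expands_zero⟩
  add_mem' := fun ⟨a, ha⟩ ⟨b, hb⟩ => ⟨a + b, ha.add hb⟩
  smul_mem' := fun c _ ⟨a, ha⟩ => ⟨c • a, ha.smul c⟩

theorem span_le_expansionSubmodule :
    Submodule.span 𝕜 (Set.range x) ≤ expansionSubmodule 𝕜 x :=
  Submodule.span_le.2 <| Set.range_subset_iff.2 fun n => ⟨_, expands_pi_single n⟩

namespace Grunblum

variable {M : ℝ} (hG : Grunblum 𝕜 x M)
include hG

theorem norm_partialSum_le (h : Expands 𝕜 x a v) (n : ℕ) :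
    ‖partialSum 𝕜 x a n‖ ≤ M * ‖v‖ :=
  ge_of_tendsto (h.norm.const_mul M) (eventually_atTop.2 ⟨n, fun _ hk => hG a n _ hk⟩)

theorem norm_coeff_le {n : ℕ} (hx : x n ≠ 0) (h : Expands 𝕜 x a v) :
    ‖a n‖ ≤ 2 * M / ‖x n‖ * ‖v‖ := by
  rw [div_mul_eq_mul_div, le_div_iff₀ (norm_pos_iff.2 hx), ← norm_smul,
    ← partialSum_succ_sub]
  calc ‖partialSum 𝕜 x a (n + 1) - partialSum 𝕜 x a n‖
      ≤ ‖partialSum 𝕜 x a (n + 1)‖ + ‖partialSum 𝕜 x a n‖ := norm_sub_le _ _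
    _ ≤ M * ‖v‖ + M * ‖v‖ :=
      add_le_add (hG.norm_partialSum_le h _) (hG.norm_partialSum_le h _)
    _ = 2 * M * ‖v‖ := by ring

theorem expands_unique (hne : ∀ n, x n ≠ 0) (ha : Expands 𝕜 x a v)
    (hb : Expands 𝕜 x b v) : a = b := by
  funext n
  have h := hG.norm_coeff_le (hne n) (ha.sub hb)
  rw [sub_self, norm_zero, mul_zero, Pi.sub_apply, norm_le_zero_iff] at h
  exact sub_eq_zero.1 h

theorem cauchySeq_coeff (hne : ∀ n, x n ≠ 0) {b : ℕ → ℕ → 𝕜} {w : ℕ → X}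
    (hb : ∀ k, Expands 𝕜 x (b k) (w k)) (hw : CauchySeq w) (n : ℕ) :
    CauchySeq fun k => b k n :=
  cauchySeq_of_dist_le_mul hw fun j k => by
    simpa only [dist_eq_norm, Pi.sub_apply] using hG.norm_coeff_le (hne n) ((hb j).sub (hb k))

theorem expands_of_tendsto (hne : ∀ n, x n ≠ 0) {b : ℕ → ℕ → 𝕜} {w : ℕ → X}
    (hb : ∀ k, Expands 𝕜 x (b k) (w k)) (hw : Tendsto w atTop (𝓝 v)) :
    ∃ a, Expands 𝕜 x a v := by
  have hcoeff n := (hG.cauchySeq_coeff hne hb hw.cauchySeq n).tendsto_limUnder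
  set a : ℕ → 𝕜 := fun n => limUnder atTop fun k => b k n
  have hpartial (m : ℕ) : Tendsto (fun k => partialSum 𝕜 x (b k) m) atTop
      (𝓝 (partialSum 𝕜 x a m)) :=
    tendsto_finsetSum _ fun i _ => (hcoeff i).smul_const (x i)
  have hbound (k m : ℕ) : ‖partialSum 𝕜 x a m - partialSum 𝕜 x (b k) m‖ ≤ M * ‖v - w k‖ :=
    le_of_tendsto_of_tendsto' ((hpartial m).sub tendsto_const_nhds).norm
      (((hw.sub tendsto_const_nhds).norm).const_mul M) fun j => by
        simpa only [partialSum_sub] using hG.norm_partialSum_le ((hb j).sub (hb k)) m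
  have hunif : TendstoUniformly (fun k => partialSum 𝕜 x (b k)) (partialSum 𝕜 x a) atTop := by
    have hsmall : Tendsto (fun k => M * ‖v - w k‖) atTop (𝓝 0) := by
      simpa using ((tendsto_const_nhds (x := v)).sub hw).norm.const_mul M
    refine Metric.tendstoUniformly_iff.2 fun ε hε => ?_
    filter_upwards [hsmall.eventually (gt_mem_nhds hε)] with k hk m
    exact (dist_eq_norm _ _).trans_le (hbound k m) |>.trans_lt hk
  exact ⟨a, hunif.tendsto_of_eventually_tendsto (Eventually.of_forall hb) hw⟩

theorem isClosed_expansionSubmodule (hne : ∀ n, x n ≠ 0) :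
    IsClosed (expansionSubmodule 𝕜 x : Set X) := by
  refine isClosed_of_closure_subset fun v hv => ?_
  obtain ⟨w, hwmem, hwv⟩ := mem_closure_iff_seq_limit.1 hv
  choose b hb using hwmem
  exact hG.expands_of_tendsto hne hb hwv

end Grunblum

end

/-- Banach–Grunblum, sufficiency: the Grunblum condition with constant
`M ≥ 1` on a sequence of nonzero vectors implies that it is an essential basic sequence. -/
theorem stmt7 (x : ℕ → X) (hne : ∀ n, x n ≠ 0)
    (M : ℝ) (hM : 1 ≤ M) (hG : Grunblum 𝕜 x M) :
    IsEssentialBasicSeq 𝕜 x := by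
  refine ⟨fun v hv => ?_, M, by linarith, fun a v h => hG.norm_partialSum_le h⟩
  obtain ⟨a, ha⟩ : v ∈ expansionSubmodule 𝕜 x :=
    closure_minimal span_le_expansionSubmodule (hG.isClosed_expansionSubmodule hne) hv
  exact ⟨a, ha, fun b hb => hG.expands_unique hne hb ha⟩
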